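/- Each of the 2-cocycles φ_i of h_2 (for i = 1, 2, 3, specified below) gives, via [x,y]_t = [x,y] + t φ_i(x,y) with t = 1, a solvable 5-dimensional Lie algebra. In particular, the Lie algebra with basis e_1,...,e_5 and nonzero brackets [e_1,e_3] = e_5, [e_1,e_4] = e_1, [e_2,e_4] = e_5 + e_2, [e_3,e_4] = e_3, [e_4,e_5] = −2e_5 is solvable but not nilpotent. -/

import Mathlib

noncomputable section

/-- `μ_{t=1}(d₁)`, the deformation of `h₂` along `φ₁`: nonzero brackets
`[e₁,e₃] = e₅ + 2e₂ − 2e₃`, `[e₁,e₄] = e₃`, `[e₂,e₄] = e₅ + e₂`,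
`[e₃,e₄] = 2e₃ − e₂`. -/
def L1 : Type := Fin 5 → ℝ

/-- `μ_{t=1}(d₂)`, the deformation of `h₂` along `φ₂`: nonzero brackets
`[e₁,e₃] = e₅ + e₁`, `[e₁,e₄] = −e₂`, `[e₂,e₃] = 2e₂`, `[e₂,e₄] = e₅`,
`[e₃,e₄] = −e₄`, `[e₃,e₅] = −3e₅`. -/
def L2 : Type := Fin 5 → ℝ

/-- `μ_{t=1}(d₃)`, the deformation of `h₂` along `φ₃`: nonzero brackets
`[e₁,e₃] = e₅`, `[e₁,e₄] = e₁`, `[e₂,e₄] = e₅ + e₂`, `[e₃,e₄] = e₃`,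
`[e₄,e₅] = −2e₅`. -/
def L3 : Type := Fin 5 → ℝ

instance : AddCommGroup L1 := inferInstanceAs (AddCommGroup (Fin 5 → ℝ))
instance : Module ℝ L1 := inferInstanceAs (Module ℝ (Fin 5 → ℝ))
instance : AddCommGroup L2 := inferInstanceAs (AddCommGroup (Fin 5 → ℝ))
instance : Module ℝ L2 := inferInstanceAs (Module ℝ (Fin 5 → ℝ))
instance : AddCommGroup L3 := inferInstanceAs (AddCommGroup (Fin 5 → ℝ))
instance : Module ℝ L3 := inferInstanceAs (Module ℝ (Fin 5 → ℝ))

def b1 (x y : Fin 5 → ℝ) : Fin 5 → ℝ := fun k =>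
  if k = 1 then 2 * (x 0 * y 2 - x 2 * y 0) + (x 1 * y 3 - x 3 * y 1)
      - (x 2 * y 3 - x 3 * y 2)
  else if k = 2 then -2 * (x 0 * y 2 - x 2 * y 0) + (x 0 * y 3 - x 3 * y 0)
      + 2 * (x 2 * y 3 - x 3 * y 2)
  else if k = 4 then (x 0 * y 2 - x 2 * y 0) + (x 1 * y 3 - x 3 * y 1)
  else 0

def b2 (x y : Fin 5 → ℝ) : Fin 5 → ℝ := fun k =>
  if k = 0 then x 0 * y 2 - x 2 * y 0
  else if k = 1 then -(x 0 * y 3 - x 3 * y 0) + 2 * (x 1 * y 2 - x 2 * y 1)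
  else if k = 3 then -(x 2 * y 3 - x 3 * y 2)
  else if k = 4 then (x 0 * y 2 - x 2 * y 0) + (x 1 * y 3 - x 3 * y 1)
      - 3 * (x 2 * y 4 - x 4 * y 2)
  else 0

def b3 (x y : Fin 5 → ℝ) : Fin 5 → ℝ := fun k =>
  if k = 0 then x 0 * y 3 - x 3 * y 0
  else if k = 1 then x 1 * y 3 - x 3 * y 1
  else if k = 2 then x 2 * y 3 - x 3 * y 2
  else if k = 4 then (x 0 * y 2 - x 2 * y 0) + (x 1 * y 3 - x 3 * y 1)
      - 2 * (x 3 * y 4 - x 4 * y 3)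
  else 0

section lemmas
variable (x y z : Fin 5 → ℝ) (t : ℝ)

lemma b1_add_left : b1 (x + y) z = b1 x z + b1 y z := by
  funext k; simp only [b1, Pi.add_apply]; split_ifs <;> ring
lemma b1_add_right : b1 x (y + z) = b1 x y + b1 x z := by
  funext k; simp only [b1, Pi.add_apply]; split_ifs <;> ring
lemma b1_self : b1 x x = 0 := by
  funext k; simp only [b1, Pi.zero_apply]; split_ifs <;> ring
lemma b1_leibniz : b1 x (b1 y z) = b1 (b1 x y) z + b1 y (b1 x z) := by
  funext k; fin_cases k <;> simp [b1] <;> ring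
lemma b1_smul : b1 x (t • y) = t • b1 x y := by
  funext k; simp only [b1, Pi.smul_apply, smul_eq_mul]; split_ifs <;> ring

lemma b2_add_left : b2 (x + y) z = b2 x z + b2 y z := by
  funext k; simp only [b2, Pi.add_apply]; split_ifs <;> ring
lemma b2_add_right : b2 x (y + z) = b2 x y + b2 x z := by
  funext k; simp only [b2, Pi.add_apply]; split_ifs <;> ring
lemma b2_self : b2 x x = 0 := by
  funext k; simp only [b2, Pi.zero_apply]; split_ifs <;> ring
lemma b2_leibniz : b2 x (b2 y z) = b2 (b2 x y) z + b2 y (b2 x z) := by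
  funext k; fin_cases k <;> simp [b2] <;> ring
lemma b2_smul : b2 x (t • y) = t • b2 x y := by
  funext k; simp only [b2, Pi.smul_apply, smul_eq_mul]; split_ifs <;> ring

lemma b3_add_left : b3 (x + y) z = b3 x z + b3 y z := by
  funext k; simp only [b3, Pi.add_apply]; split_ifs <;> ring
lemma b3_add_right : b3 x (y + z) = b3 x y + b3 x z := by
  funext k; simp only [b3, Pi.add_apply]; split_ifs <;> ring
lemma b3_self : b3 x x = 0 := by
  funext k; simp only [b3, Pi.zero_apply]; split_ifs <;> ring
lemma b3_leibniz : b3 x (b3 y z) = b3 (b3 x y) z + b3 y (b3 x z) := by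
  funext k; fin_cases k <;> simp [b3] <;> ring
lemma b3_smul : b3 x (t • y) = t • b3 x y := by
  funext k; simp only [b3, Pi.smul_apply, smul_eq_mul]; split_ifs <;> ring

end lemmas

instance : LieRing L1 where
  bracket x y := b1 x y
  add_lie := b1_add_left
  lie_add := b1_add_right
  lie_self := b1_self
  leibniz_lie := b1_leibniz

instance : LieAlgebra ℝ L1 where
  lie_smul t x y := b1_smul x y t

instance : LieRing L2 where
  bracket x y := b2 x y
  add_lie := b2_add_left
  lie_add := b2_add_right
  lie_self := b2_self
  leibniz_lie := b2_leibniz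

instance : LieAlgebra ℝ L2 where
  lie_smul t x y := b2_smul x y t

instance : LieRing L3 where
  bracket x y := b3 x y
  add_lie := b3_add_left
  lie_add := b3_add_right
  lie_self := b3_self
  leibniz_lie := b3_leibniz

instance : LieAlgebra ℝ L3 where
  lie_smul t x y := b3_smul x y t

/-! The derived series is pushed into coordinate subspaces until it reaches an abelian one.
For `μ_{t=1}(d₃)`: brackets have no `e₄`-component, brackets of vectors without
`e₄`-component lie in `ℝ e₅`, and `ℝ e₅` is abelian. For `μ_{t=1}(d₁)` the derived algebra
lies in the abelian subspace `⟨e₂, e₃, e₅⟩`; for `μ_{t=1}(d₂)` it lies in `⟨e₁, e₂, e₄, e₅⟩`,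
whose brackets lie in the abelian subspace `⟨e₂, e₅⟩`.

`μ_{t=1}(d₃)` is not nilpotent because `[e₄, e₅] = −2e₅`: `e₅` is an eigenvector of `ad e₄`
for a nonzero eigenvalue, whereas `ad` of a nilpotent Lie algebra is nilpotent. -/

namespace LieAlgebra

variable {R L : Type*} [CommRing R] [LieRing L] [LieAlgebra R L]

theorem derivedSeries_succ_le {k : ℕ} {S T : Submodule R L}
    (hk : (derivedSeries R L k).toSubmodule ≤ S) (hST : ∀ x ∈ S, ∀ y ∈ S, ⁅x, y⁆ ∈ T) :
    (derivedSeries R L (k + 1)).toSubmodule ≤ T := by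
  rw [derivedSeries_def, derivedSeriesOfIdeal_succ, ← derivedSeries_def,
    LieSubmodule.lieIdeal_oper_eq_linear_span', Submodule.span_le]
  rintro _ ⟨x, hx, y, hy, rfl⟩
  exact hST x (hk hx) y (hk hy)

theorem isSolvable_of_derivedSeries_le {k : ℕ} {S : Submodule R L}
    (hk : (derivedSeries R L k).toSubmodule ≤ S) (hS : ∀ x ∈ S, ∀ y ∈ S, ⁅x, y⁆ = 0) :
    IsSolvable L := by
  have h : (derivedSeries R L (k + 1)).toSubmodule ≤ ⊥ :=
    derivedSeries_succ_le hk fun x hx y hy => (Submodule.mem_bot R).mpr (hS x hx y hy)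
  rw [le_bot_iff, LieSubmodule.toSubmodule_eq_bot] at h
  exact IsSolvable.mk h

theorem not_isNilpotent_of_lie_eq_smul {K L : Type*} [Field K] [LieRing L] [LieAlgebra K L]
    {x y : L} {c : K} (hc : c ≠ 0) (hy : y ≠ 0) (h : ⁅x, y⁆ = c • y) :
    ¬ LieRing.IsNilpotent L := by
  intro hL
  obtain ⟨k, hk⟩ := nilpotent_ad_of_nilpotent_algebra K L
  have h_pow : ∀ n : ℕ, (ad K L x ^ n) y = c ^ n • y := by
    intro n
    induction n with
    | zero => simp
    | succ n ih =>
      rw [pow_succ', Module.End.mul_apply, ih, map_smul, ad_apply, h, smul_smul, pow_succ]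
  have h_zero := h_pow k
  rw [hk x, LinearMap.zero_apply] at h_zero
  exact smul_ne_zero (pow_ne_zero k hc) hy h_zero.symm

end LieAlgebra

-- Coordinate `i` of a vector in `Fin 5 → ℝ` is its coefficient of `e_{i+1}`.
def coordZero (s : Set (Fin 5)) : Submodule ℝ (Fin 5 → ℝ) :=
  Submodule.pi s fun _ => ⊥

theorem mem_coordZero {s : Set (Fin 5)} {x : Fin 5 → ℝ} :
    x ∈ coordZero s ↔ ∀ i ∈ s, x i = 0 := by
  simp [coordZero, Submodule.mem_pi]

theorem b1_mem_coordZero (x y : Fin 5 → ℝ) : b1 x y ∈ coordZero {0, 3} := by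
  simp [mem_coordZero, b1]

theorem b1_eq_zero_of_mem_coordZero {x y : Fin 5 → ℝ} (hx : x ∈ coordZero {0, 3})
    (hy : y ∈ coordZero {0, 3}) : b1 x y = 0 := by
  simp only [mem_coordZero, Set.forall_mem_insert, Set.mem_singleton_iff, forall_eq] at hx hy
  funext k
  simp [b1, hx, hy]

theorem b2_mem_coordZero (x y : Fin 5 → ℝ) : b2 x y ∈ coordZero {2} := by
  simp [mem_coordZero, b2]

theorem b2_mem_coordZero_of_mem {x y : Fin 5 → ℝ} (hx : x ∈ coordZero {2})
    (hy : y ∈ coordZero {2}) : b2 x y ∈ coordZero {0, 2, 3} := by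
  simp only [mem_coordZero, Set.forall_mem_insert, Set.mem_singleton_iff, forall_eq] at hx hy ⊢
  simp [b2, hx, hy]

theorem b2_eq_zero_of_mem_coordZero {x y : Fin 5 → ℝ} (hx : x ∈ coordZero {0, 2, 3})
    (hy : y ∈ coordZero {0, 2, 3}) : b2 x y = 0 := by
  simp only [mem_coordZero, Set.forall_mem_insert, Set.mem_singleton_iff, forall_eq] at hx hy
  funext k
  simp [b2, hx, hy]

theorem b3_mem_coordZero (x y : Fin 5 → ℝ) : b3 x y ∈ coordZero {3} := by
  simp [mem_coordZero, b3]

theorem b3_mem_coordZero_of_mem {x y : Fin 5 → ℝ} (hx : x ∈ coordZero {3})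
    (hy : y ∈ coordZero {3}) : b3 x y ∈ coordZero {0, 1, 2, 3} := by
  simp only [mem_coordZero, Set.forall_mem_insert, Set.mem_singleton_iff, forall_eq] at hx hy ⊢
  simp [b3, hx, hy]

theorem b3_eq_zero_of_mem_coordZero {x y : Fin 5 → ℝ} (hx : x ∈ coordZero {0, 1, 2, 3})
    (hy : y ∈ coordZero {0, 1, 2, 3}) : b3 x y = 0 := by
  simp only [mem_coordZero, Set.forall_mem_insert, Set.mem_singleton_iff, forall_eq] at hx hy
  funext k
  simp [b3, hx, hy]

theorem b3_single_three_single_four :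
    b3 (Pi.single 3 1) (Pi.single 4 1) = (-2 : ℝ) • Pi.single 4 1 := by
  funext k
  fin_cases k <;> simp [b3]

open LieAlgebra

theorem isSolvable_L1 : IsSolvable L1 :=
  isSolvable_of_derivedSeries_le (R := ℝ) (k := 1)
    (derivedSeries_succ_le (T := coordZero {0, 3}) le_top fun x _ y _ => b1_mem_coordZero x y)
    fun _ hx _ hy => b1_eq_zero_of_mem_coordZero hx hy

theorem isSolvable_L2 : IsSolvable L2 :=
  isSolvable_of_derivedSeries_le (R := ℝ) (k := 2)
    (derivedSeries_succ_le
      (derivedSeries_succ_le (T := coordZero {2}) le_top fun x _ y _ => b2_mem_coordZero x y)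
      fun _ hx _ hy => b2_mem_coordZero_of_mem hx hy)
    fun _ hx _ hy => b2_eq_zero_of_mem_coordZero hx hy

theorem isSolvable_L3 : IsSolvable L3 :=
  isSolvable_of_derivedSeries_le (R := ℝ) (k := 2)
    (derivedSeries_succ_le
      (derivedSeries_succ_le (T := coordZero {3}) le_top fun x _ y _ => b3_mem_coordZero x y)
      fun _ hx _ hy => b3_mem_coordZero_of_mem hx hy)
    fun _ hx _ hy => b3_eq_zero_of_mem_coordZero hx hy

theorem not_isNilpotent_L3 : ¬ LieRing.IsNilpotent L3 :=
  not_isNilpotent_of_lie_eq_smul (K := ℝ) (L := L3) (x := Pi.single 3 1) (by norm_num)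
    (Pi.single_ne_zero_iff.mpr one_ne_zero) b3_single_three_single_four

/-- Each of the deformed algebras `μ_{t=1}(d₁)`, `μ_{t=1}(d₂)`, `μ_{t=1}(d₃)`
(obtained from `h₂` via the cocycles `φ₁, φ₂, φ₃` at `t = 1`) is solvable; and
`μ_{t=1}(d₃)` — the algebra with nonzero brackets `[e₁,e₃] = e₅`,
`[e₁,e₄] = e₁`, `[e₂,e₄] = e₅ + e₂`, `[e₃,e₄] = e₃`, `[e₄,e₅] = −2e₅` — is
solvable but not nilpotent. -/
theorem deformations_solvable_d3_not_nilpotent :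
    LieAlgebra.IsSolvable L1 ∧ LieAlgebra.IsSolvable L2 ∧
      LieAlgebra.IsSolvable L3 ∧ ¬ LieRing.IsNilpotent L3 :=
  ⟨isSolvable_L1, isSolvable_L2, isSolvable_L3, not_isNilpotent_L3⟩
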